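/- Let (R_1, …, R_n, R_{n+1}) be an exchangeable random vector of real-valued random variables that are almost surely pairwise distinct, and let k ∈ {1, …, n}. Let R_{(k)} denote the k-th order statistic of R_1, …, R_n. Then P(R_{n+1} ≤ R_{(k)}) = k/(n+1). -/

import Mathlib

open MeasureTheory

/-- The `k`-th order statistic (0-indexed) of the tuple `f : Fin m → ℝ`. -/
noncomputable def orderStat {m : ℕ} (f : Fin m → ℝ) (k : Fin m) : ℝ :=
  f (Tuple.sort f k)

/-- A random vector `R` is exchangeable if every permutation of its components
has the same joint distribution as the original. -/
def Exchangeable {Ω : Type*} [MeasurableSpace Ω] (P : Measure Ω) {m : ℕ}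
    (R : Ω → Fin m → ℝ) : Prop :=
  ∀ π : Equiv.Perm (Fin m), Measure.map (fun ω => R ω ∘ π) P = Measure.map R P

/-!
Let `ρ` be the rank of `R_{n+1}`, the number of components of the whole vector strictly below it.
For any tuple, `R_{n+1} ≤ R_{(k)}` holds exactly when `ρ < k`. Exchangeability gives every
component's rank the same law, and since the components are a.s. distinct their ranks are a.s. a
permutation of `{0, …, n}`; so for each `r ≤ n` the events "component `i` has rank `r`" partition
`Ω` up to a null set, and each has probability `1/(n+1)`.
-/

open Finset

namespace Tuple

variable {α : Type*} [LinearOrder α] {m : ℕ}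

def rank (f : Fin m → α) (i : Fin m) : ℕ := #{j | f j < f i}

lemma rank_comp_perm (f : Fin m → α) (π : Equiv.Perm (Fin m)) (i : Fin m) :
    rank (f ∘ π) i = rank f (π i) :=
  card_equiv π (by simp)

lemma rank_lt_card (f : Fin m → α) (i : Fin m) : rank f i < m := by
  simpa [rank] using card_lt_univ_of_notMem (s := {j | f j < f i}) (x := i) (by simp)

lemma rank_lt_rank {f : Fin m → α} {i j : Fin m} (h : f i < f j) : rank f i < rank f j := by
  refine card_lt_card <| (ssubset_iff_of_subset ?_).2 ⟨i, by simpa using h, by simp⟩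
  intro l hl
  simp only [mem_filter, mem_univ, true_and] at hl ⊢
  exact hl.trans h

lemma rank_injective {f : Fin m → α} (hf : Function.Injective f) :
    Function.Injective (rank f) := by
  intro i j hij
  by_contra hne
  rcases (hf.ne hne).lt_or_gt with h | h
  · exact (rank_lt_rank h).ne hij
  · exact (rank_lt_rank h).ne' hij

lemma exists_rank_eq {f : Fin m → α} (hf : Function.Injective f) {r : ℕ} (hr : r < m) :
    ∃ i, rank f i = r := by
  have hinj : Function.Injective fun i => (⟨rank f i, rank_lt_card f i⟩ : Fin m) :=
    fun i j h => rank_injective hf (congrArg Fin.val h)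
  obtain ⟨i, hi⟩ := Finite.surjective_of_injective hinj ⟨r, hr⟩
  exact ⟨i, congrArg Fin.val hi⟩

lemma rank_last {n : ℕ} (f : Fin (n + 1) → α) :
    rank f (Fin.last n) = #{j : Fin n | f j.castSucc < f (Fin.last n)} := by
  rw [rank, card_filter, card_filter, Fin.sum_univ_castSucc]
  simp

end Tuple

open Tuple

lemma le_orderStat_iff {n : ℕ} (g : Fin n → ℝ) (t : ℝ) (k : Fin n) :
    t ≤ orderStat g k ↔ #{j | g j < t} ≤ k := by
  have hcard : #{j | g (sort g j) < t} = #{j | g j < t} := card_equiv (sort g) (by simp)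
  rw [orderStat, ← not_lt, ← not_lt, ← hcard]
  exact not_congr (lt_card_lt_iff_apply_lt_of_monotone (monotone_sort g)).symm

lemma measurable_rank {m : ℕ} (i : Fin m) : Measurable fun f : Fin m → ℝ => rank f i := by
  simp_rw [rank, card_filter]
  exact Finset.measurable_sum _ fun j _ => Measurable.ite
    (measurableSet_lt (measurable_pi_apply j) (measurable_pi_apply i)) measurable_const
    measurable_const

section

variable {Ω : Type*} [MeasurableSpace Ω] {P : Measure Ω} {m : ℕ} {R : Ω → Fin m → ℝ}

lemma Exchangeable.measure_rank_eq (hexch : Exchangeable P R) (hR : Measurable R)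
    (i j : Fin m) (r : ℕ) : P {ω | rank (R ω) i = r} = P {ω | rank (R ω) j = r} := by
  have hs : MeasurableSet {f : Fin m → ℝ | rank f j = r} :=
    measurable_rank j (measurableSet_singleton r)
  have h := congrArg (· {f | rank f j = r}) (hexch (Equiv.swap i j))
  rw [Measure.map_apply (by fun_prop) hs, Measure.map_apply hR hs] at h
  simpa [Set.preimage, rank_comp_perm] using h

lemma sum_measure_rank_eq_one [IsProbabilityMeasure P] (hR : Measurable R)
    (hdist : ∀ᵐ ω ∂P, Function.Injective (R ω)) {r : ℕ} (hr : r < m) :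
    ∑ i, P {ω | rank (R ω) i = r} = 1 := by
  have hdisj :
      Pairwise fun i j => AEDisjoint P {ω | rank (R ω) i = r} {ω | rank (R ω) j = r} := by
    intro i j hij
    refine measure_mono_null (fun ω hω => ?_) (ae_iff.1 hdist)
    exact fun hinj => hij (rank_injective hinj (hω.1.trans hω.2.symm))
  have hcover : (⋃ i, {ω | rank (R ω) i = r}) =ᵐ[P] (Set.univ : Set Ω) := by
    filter_upwards [hdist] with ω hω
    exact eq_true (Set.mem_iUnion.2 (exists_rank_eq hω hr))
  have hmeas (i : Fin m) : NullMeasurableSet {ω | rank (R ω) i = r} P :=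
    ((measurable_rank i).comp hR (measurableSet_singleton r)).nullMeasurableSet
  calc ∑ i, P {ω | rank (R ω) i = r} = P (⋃ i, {ω | rank (R ω) i = r}) := by
        rw [measure_iUnion₀ hdisj hmeas, tsum_fintype]
    _ = 1 := by rw [measure_congr hcover, measure_univ]

lemma Exchangeable.measure_rank_eq_inv [IsProbabilityMeasure P] (hexch : Exchangeable P R)
    (hR : Measurable R) (hdist : ∀ᵐ ω ∂P, Function.Injective (R ω)) (i : Fin m) {r : ℕ}
    (hr : r < m) : P {ω | rank (R ω) i = r} = (m : ENNReal)⁻¹ := by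
  have h := sum_measure_rank_eq_one hR hdist hr
  simp only [hexch.measure_rank_eq hR _ i r, sum_const, card_univ, Fintype.card_fin,
    nsmul_eq_mul] at h
  exact ENNReal.eq_inv_of_mul_eq_one_left (by rwa [mul_comm])

end

/-- For an exchangeable random vector `(R 0, …, R (n-1), R n)` with almost surely
pairwise distinct components, and `k : Fin n` (0-indexed; the 1-indexed rank is
`k + 1`), the probability that `R n` is at most the `(k+1)`-th order statistic of
the first `n` components equals `(k + 1)/(n + 1)`. -/
theorem prob_last_le_orderStat_eq {Ω : Type*} [MeasurableSpace Ω]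
    (P : Measure Ω) [IsProbabilityMeasure P] (n : ℕ) (R : Ω → Fin (n + 1) → ℝ)
    (hR : Measurable R) (hexch : Exchangeable P R)
    (hdist : ∀ᵐ ω ∂P, Function.Injective (R ω)) (k : Fin n) :
    P {ω | R ω (Fin.last n) ≤ orderStat (fun i : Fin n => R ω i.castSucc) k} =
      (((k : ℕ) + 1 : ℕ) : ENNReal) / ((n + 1 : ℕ) : ENNReal) := by
  have hevent : {ω | R ω (Fin.last n) ≤ orderStat (fun i : Fin n => R ω i.castSucc) k}
      = (fun ω => rank (R ω) (Fin.last n)) ⁻¹' ↑(range (k + 1)) := by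
    ext ω
    simp [le_orderStat_iff, rank_last]
  rw [hevent, ← sum_measure_preimage_singleton (f := fun ω => rank (R ω) (Fin.last n)) _
    fun r _ => (measurable_rank _).comp hR (measurableSet_singleton r)]
  have hatom : ∀ r ∈ range (k + 1),
      P ((fun ω => rank (R ω) (Fin.last n)) ⁻¹' {r}) = ((n + 1 : ℕ) : ENNReal)⁻¹ :=
    fun r hr => hexch.measure_rank_eq_inv hR hdist (Fin.last n)
      (by have := k.isLt; rw [mem_range] at hr; omega)
  simp [sum_congr rfl hatom, div_eq_mul_inv]
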